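/- For x < y in {0,…,2^m − 1} and i ∈ [m], we have F_i(x) > F_i(y) if and only if M(x,y) = i. -/

import Mathlib

lemma testBit_log_self {d : ℕ} (hd : d ≠ 0) : d.testBit (Nat.log 2 d) = true := by
  have h1 : 2 ^ Nat.log 2 d ≤ d := Nat.pow_log_le_self 2 hd
  have h2 : d < 2 ^ (Nat.log 2 d + 1) := Nat.lt_pow_succ_log_self one_lt_two d
  rw [Nat.testBit_eq_decide_div_mod_eq]
  have : d / 2 ^ Nat.log 2 d = 1 := by
    have := Nat.div_lt_of_lt_mul (by rw [pow_succ] at h2; omega : d < 2 ^ Nat.log 2 d * 2)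
    have := (Nat.one_le_div_iff (Nat.pow_pos two_pos)).2 h1
    omega
  simp [this]

lemma testBit_gt_log {d j : ℕ} (hj : Nat.log 2 d < j) : d.testBit j = false := by
  apply Nat.testBit_lt_two_pow
  calc d < 2 ^ (Nat.log 2 d + 1) := Nat.lt_pow_succ_log_self one_lt_two d
    _ ≤ 2 ^ j := Nat.pow_le_pow_right two_pos hj

lemma key (x y : ℕ) (h : x ≠ y) :
    x < y ↔ y.testBit (Nat.log 2 (x ^^^ y)) = true := by
  set k := Nat.log 2 (x ^^^ y) with hk
  have hd : x ^^^ y ≠ 0 := by simpa [xor_eq_zero_iff] using h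
  have hbit : (x ^^^ y).testBit k = true := testBit_log_self hd
  rw [Nat.testBit_xor] at hbit
  have hagree : ∀ j, k < j → x.testBit j = y.testBit j := by
    intro j hj
    have := testBit_gt_log (d := x ^^^ y) (hk ▸ hj)
    rw [Nat.testBit_xor] at this
    cases h1 : x.testBit j <;> cases h2 : y.testBit j <;> simp [h1, h2] at this ⊢
  constructor
  · intro hlt
    by_contra hby
    have hby' : y.testBit k = false := by simpa using hby
    have hbx : x.testBit k = true := by
      cases hxk : x.testBit k <;> simp [hxk, hby'] at hbit ⊢
    exact absurd (Nat.lt_of_testBit k hby' hbx fun j hj => (hagree j hj).symm) (by omega)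
  · intro hby
    have hbx : x.testBit k = false := by
      cases hxk : x.testBit k <;> simp [hxk, hby] at hbit ⊢
    exact Nat.lt_of_testBit k hbx hby hagree


/-- For `x < y` in `{0,…,2^m-1}` and a bit `i < m`, flipping bit `i` reverses the order of
`x` and `y` iff `i` is the most significant bit in which they differ. -/
theorem stmt7 (m i x y : ℕ) (hi : i < m) (hx : x < 2 ^ m) (hy : y < 2 ^ m) (hxy : x < y) :
    y ^^^ 2 ^ i < x ^^^ 2 ^ i ↔ Nat.log 2 (x ^^^ y) = i := by
  set k := Nat.log 2 (x ^^^ y) with hk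
  have hne : x ≠ y := Nat.ne_of_lt hxy
  have hby : y.testBit k = true := (key x y hne).1 hxy
  have hbx : x.testBit k = false := by
    have := testBit_log_self (d := x ^^^ y) (by simpa [xor_eq_zero_iff] using hne)
    rw [Nat.testBit_xor] at this
    cases hxk : x.testBit k <;> simp [← hk, hxk, hby] at this ⊢
  have hne' : y ^^^ 2 ^ i ≠ x ^^^ 2 ^ i := by
    intro h; apply hne
    have := congrArg (· ^^^ 2 ^ i) h
    simpa [Nat.xor_assoc] using this.symm
  have hdeq : (y ^^^ 2 ^ i) ^^^ (x ^^^ 2 ^ i) = x ^^^ y := by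
    rw [Nat.xor_comm x y]
    rw [Nat.xor_assoc, Nat.xor_comm (2 ^ i), Nat.xor_assoc, Nat.xor_self, Nat.xor_zero]
  have hkey := key (y ^^^ 2 ^ i) (x ^^^ 2 ^ i) hne'
  rw [hdeq, ← hk] at hkey
  rw [hkey, Nat.testBit_xor]
  constructor
  · intro h
    rw [hbx] at h
    by_contra hki
    rw [Nat.testBit_two_pow_of_ne (fun he => hki he.symm)] at h
    simp at h
  · intro h
    rw [hbx, ← h, Nat.testBit_two_pow_self]
    rfl
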